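/- Let x, y, z ∈ ℂ with |x| < 1, |y| < 1, |z| < 1, x ≠ 1 and y ≠ 1. Then the infinite product over all triples of positive integers (l,m,n) with l ≤ n, m ≤ n and gcd(l,m,n) = 1 of (1/(1 − x^l y^m z^n))^(1/n) equals ( (1 − xz)(1 − yz) / ((1 − z)(1 − xyz)) )^( xy/((1 − x)(1 − y)) ). -/

import Mathlib

/-!
With `w = x^l y^m z^n`, the factor at a primitive triple `(l, m, n)` is
`exp (∑_{k ≥ 1} w^k / (k n))`. The pairs (primitive triple, `k`) correspond to the triples
`(L, M, N) = k (l, m, n)` with `1 ≤ L, M ≤ N`, whose term is `x^L y^M z^N / N`. Summing over `L`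
and `M` first leaves finite geometric sums, so the exponent is
`xy / ((1 - x)(1 - y)) · ∑_N (1 - x^N)(1 - y^N) z^N / N`, and this last series sums to
`log (1 - xz) + log (1 - yz) - log (1 - z) - log (1 - xyz)`.

That sum is the principal logarithm of the base because its imaginary part lies in `(-π, π)`:
for `|u|, |w| < 1` the quotient `(1 - uw) / ((1 - u)(1 - w)) = (1 - u)⁻¹ + (1 - w)⁻¹ - 1` has
positive real part, so `log (1 - uw) - log (1 - u) - log (1 - w)` has imaginary part in
`(-π/2, π/2)`, and the sum is the difference of two such expressions, for `(y, z)` and `(y, xz)`.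
-/

open Complex
open scoped Real

lemma norm_mul_lt_one {R : Type*} [SeminormedRing R] {a b : R} (ha : ‖a‖ < 1) (hb : ‖b‖ < 1) :
    ‖a * b‖ < 1 :=
  (norm_mul_le a b).trans_lt (mul_lt_one_of_nonneg_of_lt_one_left (norm_nonneg a) ha hb.le)

lemma sum_fin_pow_succ {K : Type*} [DivisionRing K] {x : K} (hx : x ≠ 1) (n : ℕ) :
    ∑ i : Fin n, x ^ ((i : ℕ) + 1) = x * (1 - x ^ n) / (1 - x) := by
  rw [Fin.sum_univ_eq_sum_range (fun i => x ^ (i + 1))]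
  simp_rw [pow_succ', ← Finset.mul_sum, geom_sum_eq hx, mul_div_assoc, ← neg_sub (x ^ n),
    ← neg_sub x, neg_div_neg_eq]

namespace Complex

variable {u w : ℂ}

lemma re_one_sub_pos (hu : ‖u‖ < 1) : 0 < (1 - u).re := by
  have := (re_le_norm u).trans_lt hu
  rw [sub_re, one_re]
  linarith

lemma one_sub_ne_zero_of_norm_lt_one (hu : ‖u‖ < 1) : 1 - u ≠ 0 := fun h => by
  simpa [h] using re_one_sub_pos hu

lemma abs_arg_one_sub_lt (hu : ‖u‖ < 1) : |arg (1 - u)| < π / 2 :=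
  abs_arg_lt_pi_div_two_iff.2 (Or.inl (re_one_sub_pos hu))

lemma half_lt_re_inv_one_sub (hu : ‖u‖ < 1) : 1 / 2 < ((1 - u)⁻¹).re := by
  have hsq : u.re ^ 2 + u.im ^ 2 < 1 := by
    rw [← sq_lt_one_iff₀ (norm_nonneg u), ← normSq_eq_norm_sq, normSq_apply] at hu
    nlinarith
  rw [inv_re, lt_div_iff₀ (normSq_pos.2 (one_sub_ne_zero_of_norm_lt_one hu)), normSq_apply]
  simp only [sub_re, one_re, sub_im, one_im]
  nlinarith

lemma abs_im_log_one_sub_mul_sub_lt (hu : ‖u‖ < 1) (hw : ‖w‖ < 1) :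
    |(log (1 - u * w) - log (1 - u) - log (1 - w)).im| < π / 2 := by
  set D := log (1 - u * w) - log (1 - u) - log (1 - w)
  have huw := norm_mul_lt_one hu hw
  have hexp : cexp D = (1 - u)⁻¹ + (1 - w)⁻¹ - 1 := by
    have hu0 := one_sub_ne_zero_of_norm_lt_one hu
    have hw0 := one_sub_ne_zero_of_norm_lt_one hw
    rw [exp_sub, exp_sub, exp_log (one_sub_ne_zero_of_norm_lt_one huw), exp_log hu0, exp_log hw0]
    field_simp
    ring
  have hcos : 0 < Real.cos D.im := by
    have hre : 0 < (cexp D).re := by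
      rw [hexp, sub_re, add_re, one_re]
      linarith [half_lt_re_inv_one_sub hu, half_lt_re_inv_one_sub hw]
    rw [exp_re] at hre
    exact pos_of_mul_pos_right hre (Real.exp_pos _).le
  have hD : D.im = arg (1 - u * w) - arg (1 - u) - arg (1 - w) := by
    simp only [D, sub_im, log_im]
  have h1 := abs_lt.1 (abs_arg_one_sub_lt huw)
  have h2 := abs_lt.1 (abs_arg_one_sub_lt hu)
  have h3 := abs_lt.1 (abs_arg_one_sub_lt hw)
  rw [abs_lt]
  constructor
  · by_contra! h
    have := Real.cos_nonpos_of_pi_div_two_le_of_le (x := -D.im) (by linarith) (by linarith)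
    rw [Real.cos_neg] at this
    linarith
  · by_contra! h
    have := Real.cos_nonpos_of_pi_div_two_le_of_le (x := D.im) h (by linarith)
    linarith

lemma one_div_one_sub_cpow (hw : ‖w‖ < 1) (s : ℂ) :
    (1 / (1 - w)) ^ s = cexp (-log (1 - w) * s) := by
  have harg : arg (1 - w) ≠ π := fun h => by
    have := abs_arg_one_sub_lt hw
    rw [h, abs_of_pos Real.pi_pos] at this
    linarith [Real.pi_pos]
  rw [cpow_def_of_ne_zero (one_div_ne_zero (one_sub_ne_zero_of_norm_lt_one hw)), one_div,
    log_inv _ harg]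

end Complex

noncomputable def baseLog (x y z : ℂ) : ℂ :=
  log (1 - x * z) + log (1 - y * z) - log (1 - z) - log (1 - x * y * z)

noncomputable def tripleTerm (x y z : ℂ) (p : ℕ × ℕ × ℕ) : ℂ :=
  x ^ p.1 * y ^ p.2.1 * (z ^ p.2.2 / p.2.2)

abbrev BoundedTriple : Type :=
  {p : ℕ × ℕ × ℕ // 0 < p.1 ∧ 0 < p.2.1 ∧ 0 < p.2.2 ∧ p.1 ≤ p.2.2 ∧ p.2.1 ≤ p.2.2}

abbrev PrimitiveTriple : Type :=
  {p : ℕ × ℕ × ℕ // 0 < p.1 ∧ 0 < p.2.1 ∧ 0 < p.2.2 ∧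
    p.1 ≤ p.2.2 ∧ p.2.1 ≤ p.2.2 ∧ Nat.gcd p.1 (Nat.gcd p.2.1 p.2.2) = 1}

def sigmaFinEquivBoundedTriple : (Σ n : ℕ, Fin n × Fin n) ≃ BoundedTriple where
  toFun s := ⟨((s.2.1 : ℕ) + 1, (s.2.2 : ℕ) + 1, s.1), Nat.succ_pos _, Nat.succ_pos _,
    s.2.1.pos, s.2.1.isLt, s.2.2.isLt⟩
  invFun t := ⟨t.1.2.2, ⟨t.1.1 - 1, by omega⟩, ⟨t.1.2.1 - 1, by omega⟩⟩
  left_inv s := rfl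
  right_inv := by
    rintro ⟨⟨l, m, n⟩, hl, hm, -⟩
    simp only [Subtype.mk.injEq, Prod.mk.injEq, and_true] at hl hm ⊢
    omega

def primitiveScale (q : PrimitiveTriple × ℕ) : BoundedTriple :=
  ⟨((q.2 + 1) * q.1.1.1, (q.2 + 1) * q.1.1.2.1, (q.2 + 1) * q.1.1.2.2),
    Nat.mul_pos q.2.succ_pos q.1.2.1, Nat.mul_pos q.2.succ_pos q.1.2.2.1,
    Nat.mul_pos q.2.succ_pos q.1.2.2.2.1, Nat.mul_le_mul_left _ q.1.2.2.2.2.1,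
    Nat.mul_le_mul_left _ q.1.2.2.2.2.2.1⟩

lemma Nat.gcd_mul_left_gcd_mul_left (k l m n : ℕ) :
    Nat.gcd (k * l) (Nat.gcd (k * m) (k * n)) = k * Nat.gcd l (Nat.gcd m n) := by
  rw [Nat.gcd_mul_left, Nat.gcd_mul_left]

lemma primitiveScale_injective : Function.Injective primitiveScale := by
  intro q q' h
  obtain ⟨⟨⟨l, m, n⟩, _, _, _, _, _, hp⟩, k⟩ := q
  obtain ⟨⟨⟨l', m', n'⟩, _, _, _, _, _, hp'⟩, k'⟩ := q'
  simp only [primitiveScale, Subtype.mk.injEq, Prod.mk.injEq] at h hp hp'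
  obtain ⟨hl, hm, hn⟩ := h
  have hk : k + 1 = k' + 1 := by
    simpa [Nat.gcd_mul_left_gcd_mul_left, hp, hp'] using congrArg₂ Nat.gcd hl (congrArg₂ Nat.gcd hm hn)
  rw [hk] at hl hm hn
  simp_all

lemma primitiveScale_surjective : Function.Surjective primitiveScale := by
  rintro ⟨⟨l, m, n⟩, hl, hm, hn, hln, hmn⟩
  set g := Nat.gcd l (Nat.gcd m n)
  have hg : 0 < g := Nat.gcd_pos_of_pos_left _ hl
  have hgl : g ∣ l := Nat.gcd_dvd_left _ _
  have hgmn : g ∣ Nat.gcd m n := Nat.gcd_dvd_right _ _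
  have hgm : g ∣ m := hgmn.trans (Nat.gcd_dvd_left _ _)
  have hgn : g ∣ n := hgmn.trans (Nat.gcd_dvd_right _ _)
  refine ⟨⟨⟨(l / g, m / g, n / g), Nat.div_pos (Nat.le_of_dvd hl hgl) hg,
    Nat.div_pos (Nat.le_of_dvd hm hgm) hg, Nat.div_pos (Nat.le_of_dvd hn hgn) hg,
    Nat.div_le_div_right hln, Nat.div_le_div_right hmn, ?_⟩, g - 1⟩, ?_⟩
  · rw [Nat.gcd_div hgm hgn, Nat.gcd_div hgl hgmn, Nat.div_self hg]
  · simp only [primitiveScale, Nat.sub_add_cancel hg, Nat.mul_div_cancel' hgl,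
      Nat.mul_div_cancel' hgm, Nat.mul_div_cancel' hgn]

noncomputable def primitiveScaleEquiv : PrimitiveTriple × ℕ ≃ BoundedTriple :=
  Equiv.ofBijective primitiveScale ⟨primitiveScale_injective, primitiveScale_surjective⟩

section

variable {x y z : ℂ}

lemma abs_im_baseLog_lt (hx : ‖x‖ < 1) (hy : ‖y‖ < 1) (hz : ‖z‖ < 1) :
    |(baseLog x y z).im| < π := by
  have hyz := abs_lt.1 (abs_im_log_one_sub_mul_sub_lt hy hz)
  have hyxz := abs_lt.1 (abs_im_log_one_sub_mul_sub_lt hy (norm_mul_lt_one hx hz))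
  have hsplit : baseLog x y z = (log (1 - y * z) - log (1 - y) - log (1 - z)) -
      (log (1 - y * (x * z)) - log (1 - y) - log (1 - x * z)) := by
    rw [baseLog, show y * (x * z) = x * y * z by ring]
    ring
  rw [hsplit, sub_im, abs_lt]
  constructor <;> linarith

lemma exp_baseLog (hx : ‖x‖ < 1) (hy : ‖y‖ < 1) (hz : ‖z‖ < 1) :
    cexp (baseLog x y z) = (1 - x * z) * (1 - y * z) / ((1 - z) * (1 - x * y * z)) := by
  have hxz := one_sub_ne_zero_of_norm_lt_one (norm_mul_lt_one hx hz)
  have hyz := one_sub_ne_zero_of_norm_lt_one (norm_mul_lt_one hy hz)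
  have hz0 := one_sub_ne_zero_of_norm_lt_one hz
  have hxyz := one_sub_ne_zero_of_norm_lt_one (norm_mul_lt_one (norm_mul_lt_one hx hy) hz)
  rw [baseLog, exp_sub, exp_sub, exp_add, exp_log hxz, exp_log hyz, exp_log hz0, exp_log hxyz,
    div_div]

lemma base_cpow_eq_exp (hx : ‖x‖ < 1) (hy : ‖y‖ < 1) (hz : ‖z‖ < 1) (s : ℂ) :
    ((1 - x * z) * (1 - y * z) / ((1 - z) * (1 - x * y * z))) ^ s = cexp (baseLog x y z * s) := by
  have him := abs_lt.1 (abs_im_baseLog_lt hx hy hz)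
  rw [← exp_baseLog hx hy hz, cpow_def_of_ne_zero (exp_ne_zero _), log_exp him.1 him.2.le]

lemma hasSum_one_sub_pow_mul_one_sub_pow (hx : ‖x‖ < 1) (hy : ‖y‖ < 1) (hz : ‖z‖ < 1) :
    HasSum (fun n : ℕ => (1 - x ^ n) * (1 - y ^ n) * (z ^ n / n)) (baseLog x y z) := by
  have hlog {u : ℂ} (hu : ‖u‖ < 1) := hasSum_taylorSeries_neg_log hu
  have h := (((hlog hz).sub (hlog (norm_mul_lt_one hx hz))).sub
    (hlog (norm_mul_lt_one hy hz))).add (hlog (norm_mul_lt_one (norm_mul_lt_one hx hy) hz))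
  rw [show baseLog x y z =
      -log (1 - z) - -log (1 - x * z) - -log (1 - y * z) + -log (1 - x * y * z) by
    unfold baseLog; ring]
  exact h.congr_fun fun n => by ring

lemma summable_tripleTerm (hx : ‖x‖ < 1) (hy : ‖y‖ < 1) (hz : ‖z‖ < 1) :
    Summable (tripleTerm x y z) := by
  have hgeom {u : ℂ} (hu : ‖u‖ < 1) : Summable fun n : ℕ => ‖u‖ ^ n :=
    summable_geometric_of_lt_one (norm_nonneg u) hu
  refine Summable.of_norm_bounded (g := fun p => ‖x‖ ^ p.1 * (‖y‖ ^ p.2.1 * ‖z‖ ^ p.2.2))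
    ((hgeom hx).mul_of_nonneg ((hgeom hy).mul_of_nonneg (hgeom hz) (fun _ => by positivity)
      (fun _ => by positivity)) (fun _ => by positivity) (fun _ => by positivity)) fun p => ?_
  rw [tripleTerm, norm_mul, norm_mul, norm_div, norm_pow, norm_pow, norm_pow, norm_natCast,
    mul_assoc]
  gcongr
  exact div_nat_le_self_of_nonnneg (by positivity) _

lemma hasSum_sum_fin_tripleTerm (hx : ‖x‖ < 1) (hy : ‖y‖ < 1) (hz : ‖z‖ < 1) (hx1 : x ≠ 1)
    (hy1 : y ≠ 1) :
    HasSum (fun n : ℕ => ∑ ij : Fin n × Fin n, tripleTerm x y z ((ij.1 : ℕ) + 1, (ij.2 : ℕ) + 1, n))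
      (x * y / ((1 - x) * (1 - y)) * baseLog x y z) := by
  refine ((hasSum_one_sub_pow_mul_one_sub_pow hx hy hz).mul_left _).congr_fun fun n => ?_
  simp only [tripleTerm, Fintype.sum_prod_type, ← Finset.sum_mul, ← Finset.mul_sum,
    sum_fin_pow_succ hx1, sum_fin_pow_succ hy1]
  rw [div_mul_div_comm]
  ring

lemma hasSum_boundedTriple (hx : ‖x‖ < 1) (hy : ‖y‖ < 1) (hz : ‖z‖ < 1) (hx1 : x ≠ 1)
    (hy1 : y ≠ 1) :
    HasSum (fun t : BoundedTriple => tripleTerm x y z t)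
      (x * y / ((1 - x) * (1 - y)) * baseLog x y z) := by
  rw [← sigmaFinEquivBoundedTriple.hasSum_iff]
  exact (hasSum_sum_fin_tripleTerm hx hy hz hx1 hy1).sigma_of_hasSum (fun n => hasSum_fintype _)
    ((summable_tripleTerm hx hy hz).comp_injective
      (Subtype.val_injective.comp sigmaFinEquivBoundedTriple.injective))

lemma hasSum_tripleTerm_mul (p : ℕ × ℕ × ℕ) (hw : ‖x ^ p.1 * y ^ p.2.1 * z ^ p.2.2‖ < 1) :
    HasSum (fun k : ℕ => tripleTerm x y z ((k + 1) * p.1, (k + 1) * p.2.1, (k + 1) * p.2.2))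
      (-log (1 - x ^ p.1 * y ^ p.2.1 * z ^ p.2.2) * (1 / p.2.2)) := by
  refine ((hasSum_taylorSeries_neg_log' hw).mul_right _).congr_fun fun k => ?_
  simp only [tripleTerm, pow_mul', mul_pow, Nat.cast_mul, ← div_div]
  push_cast
  ring

lemma norm_pow_mul_pow_mul_pow_lt_one (hx : ‖x‖ < 1) (hy : ‖y‖ < 1) (hz : ‖z‖ < 1) {l m n : ℕ}
    (hn : n ≠ 0) : ‖x ^ l * y ^ m * z ^ n‖ < 1 := by
  rw [norm_mul, norm_mul, norm_pow, norm_pow, norm_pow]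
  exact mul_lt_one_of_nonneg_of_lt_one_right
    (mul_le_one₀ (pow_le_one₀ (norm_nonneg x) hx.le) (by positivity)
      (pow_le_one₀ (norm_nonneg y) hy.le))
    (by positivity) (pow_lt_one₀ (norm_nonneg z) hz hn)

lemma hasSum_primitiveTriple (hx : ‖x‖ < 1) (hy : ‖y‖ < 1) (hz : ‖z‖ < 1) (hx1 : x ≠ 1)
    (hy1 : y ≠ 1) :
    HasSum (fun p : PrimitiveTriple =>
        -log (1 - x ^ p.1.1 * y ^ p.1.2.1 * z ^ p.1.2.2) * (1 / p.1.2.2))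
      (x * y / ((1 - x) * (1 - y)) * baseLog x y z) :=
  (primitiveScaleEquiv.hasSum_iff.2 (hasSum_boundedTriple hx hy hz hx1 hy1)).prod_fiberwise
    fun p => hasSum_tripleTerm_mul p.1 (norm_pow_mul_pow_mul_pow_lt_one hx hy hz p.2.2.2.1.ne')

end

theorem stmt_10 (x y z : ℂ) (hx : ‖x‖ < 1) (hy : ‖y‖ < 1) (hz : ‖z‖ < 1)
    (hx1 : x ≠ 1) (hy1 : y ≠ 1) :
    (∏' p : {p : ℕ × ℕ × ℕ // 0 < p.1 ∧ 0 < p.2.1 ∧ 0 < p.2.2 ∧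
        p.1 ≤ p.2.2 ∧ p.2.1 ≤ p.2.2 ∧ Nat.gcd p.1 (Nat.gcd p.2.1 p.2.2) = 1},
      (1 / (1 - x ^ p.1.1 * y ^ p.1.2.1 * z ^ p.1.2.2)) ^ (1 / (p.1.2.2 : ℂ))) =
    ((1 - x * z) * (1 - y * z) / ((1 - z) * (1 - x * y * z))) ^
      (x * y / ((1 - x) * (1 - y))) := by
  calc _ = ∏' p : PrimitiveTriple,
        cexp (-log (1 - x ^ p.1.1 * y ^ p.1.2.1 * z ^ p.1.2.2) * (1 / p.1.2.2)) :=
        tprod_congr fun p =>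
          one_div_one_sub_cpow (norm_pow_mul_pow_mul_pow_lt_one hx hy hz p.2.2.2.1.ne') _
    _ = cexp (x * y / ((1 - x) * (1 - y)) * baseLog x y z) :=
        (hasSum_primitiveTriple hx hy hz hx1 hy1).cexp.tprod_eq
    _ = _ := by rw [base_cpow_eq_exp hx hy hz, mul_comm]
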